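/- arXiv:1206.6381 — 3 statements merged into one kernel-verified Lean document; each statement's English description precedes it below -/
import Mathlib

section
/- Let q(x) = p(x)^{1/d} where p is L-Lipschitz and bounded below by p_min > 0. For λ < 1 and ‖x − y‖ ≤ p_min·λ/L, the q-distance satisfies (1 − λ)^{1/d} q(x)‖x − y‖ ≤ D_q(x,y) ≤ (1 + λ)^{1/d} q(x)‖x − y‖, provided the ball {z : ‖z − x‖ ≤ p_min·λ/L} contains the straight segment from x to y and every q-geodesic between x and y. -/
open Set

noncomputable def fLength {d : ℕ} (f : EuclideanSpace ℝ (Fin d) → ℝ)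
    (γ : ℝ → EuclideanSpace ℝ (Fin d)) : ℝ :=
  ∫ t in (0:ℝ)..1, f (γ t) * ‖deriv γ t‖

def IsPathIn {d : ℕ} (X : Set (EuclideanSpace ℝ (Fin d)))
    (x y : EuclideanSpace ℝ (Fin d)) (γ : ℝ → EuclideanSpace ℝ (Fin d)) : Prop :=
  γ 0 = x ∧ γ 1 = y ∧ (∀ t ∈ Set.Icc (0:ℝ) 1, γ t ∈ X) ∧
    ContDiffOn ℝ 1 γ (Set.Icc (0:ℝ) 1)

noncomputable def fDist {d : ℕ} (X : Set (EuclideanSpace ℝ (Fin d)))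
    (f : EuclideanSpace ℝ (Fin d) → ℝ) (x y : EuclideanSpace ℝ (Fin d)) : ℝ :=
  sInf {l | ∃ γ : ℝ → EuclideanSpace ℝ (Fin d), IsPathIn X x y γ ∧ fLength f γ = l}

/-!
On the ball of radius `pmin * λ / L` around `x` the Lipschitz bound gives `|p z - p x| ≤ λ p x`,
so `q` is pinched between `(1 ∓ λ)^{1/d} q x`. The straight segment stays in the ball, which gives
the upper bound. For the lower bound, follow an arbitrary path up to the first time it leaves the
ball (or to its end): up to that time its weighted length is at least `(1 - λ)^{1/d} q x` times
its Euclidean length, which is at least `‖x - y‖`.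
-/

open MeasureTheory Metric

theorem ContinuousOn.exists_first_exit_Icc {φ : ℝ → ℝ} {a b r : ℝ} (hab : a ≤ b)
    (hφ : ContinuousOn φ (Icc a b)) (ha : φ a ≤ r) :
    ∃ τ ∈ Icc a b, (∀ t ∈ Icc a τ, φ t ≤ r) ∧ min (φ b) r ≤ φ τ := by
  by_cases h : ∀ t ∈ Icc a b, φ t ≤ r
  · exact ⟨b, right_mem_Icc.2 hab, fun t ht => h t ht, min_le_left _ _⟩
  push Not at h
  obtain ⟨s, hs, hrs⟩ := h
  set S := Icc a b ∩ φ ⁻¹' Ici r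
  have hSb : BddBelow S := ⟨a, fun t ht => ht.1.1⟩
  have hτS : sInf S ∈ S :=
    (hφ.preimage_isClosed_of_isClosed isClosed_Icc isClosed_Ici).csInf_mem ⟨s, hs, hrs.le⟩ hSb
  obtain ⟨hτ, hτr⟩ := hτS
  have hbefore : ∀ t ∈ Icc a b, t < sInf S → φ t < r := fun t ht hlt =>
    lt_of_not_ge fun hge => (csInf_le hSb ⟨ht, hge⟩).not_gt hlt
  -- by the intermediate value theorem `φ` hits `r` on `[a, sInf S]`, hence exactly at `sInf S`
  obtain ⟨u, hu, hur⟩ :=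
    intermediate_value_Icc hτ.1 (hφ.mono (Icc_subset_Icc_right hτ.2)) ⟨ha, hτr⟩
  have hu_eq : u = sInf S :=
    le_antisymm hu.2 (csInf_le hSb ⟨⟨hu.1, hu.2.trans hτ.2⟩, hur.symm.le⟩)
  refine ⟨sInf S, hτ, fun t ht => ?_, (min_le_right _ _).trans hτr⟩
  rcases ht.2.lt_or_eq with hlt | heq
  · exact (hbefore t ⟨ht.1, ht.2.trans hτ.2⟩ hlt).le
  · rw [heq, ← hu_eq, hur]

theorem ContDiffOn.intervalIntegrable_deriv {E : Type*} [NormedAddCommGroup E]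
    [NormedSpace ℝ E] {γ : ℝ → E} {a b : ℝ} (hγ : ContDiffOn ℝ 1 γ (Icc a b)) (hab : a ≤ b) :
    IntervalIntegrable (deriv γ) volume a b := by
  rcases hab.eq_or_lt with rfl | hlt
  · exact IntervalIntegrable.refl
  have hcont := (hγ.continuousOn_derivWithin (uniqueDiffOn_Icc hlt) le_rfl).intervalIntegrable_of_Icc
    (μ := volume) hab
  rw [intervalIntegrable_iff_integrableOn_Ioo_of_le hab] at hcont ⊢
  exact hcont.congr_fun (fun t ht => derivWithin_of_mem_nhds (Icc_mem_nhds ht.1 ht.2))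
    measurableSet_Ioo

section WeightedLength

variable {d : ℕ} {X : Set (EuclideanSpace ℝ (Fin d))} {f : EuclideanSpace ℝ (Fin d) → ℝ}
  {x y : EuclideanSpace ℝ (Fin d)} {γ : ℝ → EuclideanSpace ℝ (Fin d)}

theorem fLength_nonneg (hf0 : ∀ z, 0 ≤ f z) : 0 ≤ fLength f γ :=
  intervalIntegral.integral_nonneg zero_le_one fun _ _ => mul_nonneg (hf0 _) (norm_nonneg _)

theorem fDist_le_fLength (hf0 : ∀ z, 0 ≤ f z) (hγ : IsPathIn X x y γ) :
    fDist X f x y ≤ fLength f γ :=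
  csInf_le ⟨0, by rintro _ ⟨γ, -, rfl⟩; exact fLength_nonneg hf0⟩ ⟨γ, hγ, rfl⟩

theorem le_fDist {a : ℝ} (hγ : IsPathIn X x y γ)
    (h : ∀ γ, IsPathIn X x y γ → a ≤ fLength f γ) : a ≤ fDist X f x y :=
  le_csInf ⟨_, γ, hγ, rfl⟩ (by rintro _ ⟨γ, hγ, rfl⟩; exact h γ hγ)

theorem isPathIn_lineMap (h : segment ℝ x y ⊆ X) :
    IsPathIn X x y (AffineMap.lineMap x y) := by
  refine ⟨AffineMap.lineMap_apply_zero x y, AffineMap.lineMap_apply_one x y, fun t ht => ?_,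
    (AffineMap.contDiff_lineMap x y).contDiffOn⟩
  exact h (segment_eq_image_lineMap ℝ x y ▸ mem_image_of_mem _ ht)

theorem fLength_lineMap_le {C : ℝ} (hf : Continuous f) (hC : ∀ z ∈ segment ℝ x y, f z ≤ C) :
    fLength f (AffineMap.lineMap x y) ≤ C * ‖x - y‖ := by
  have hderiv (t : ℝ) : deriv (AffineMap.lineMap x y : ℝ → _) t = y - x :=
    AffineMap.hasDerivAt_lineMap.deriv
  unfold fLength
  simp only [hderiv, norm_sub_rev y x]
  calc ∫ t in (0:ℝ)..1, f (AffineMap.lineMap x y t) * ‖x - y‖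
      ≤ ∫ _ in (0:ℝ)..1, C * ‖x - y‖ := by
        refine intervalIntegral.integral_mono_on zero_le_one ?_ intervalIntegrable_const
          fun t ht => ?_
        · exact ((hf.comp AffineMap.lineMap_continuous).mul
            continuous_const).intervalIntegrable _ _
        · exact mul_le_mul_of_nonneg_right
            (hC _ (segment_eq_image_lineMap ℝ x y ▸ mem_image_of_mem _ ht)) (norm_nonneg _)
    _ = C * ‖x - y‖ := by simp

theorem mul_norm_sub_le_fLength {c r : ℝ} (hf : Continuous f) (hf0 : ∀ z, 0 ≤ f z)
    (hc : 0 ≤ c) (hfc : ∀ z ∈ closedBall x r, c ≤ f z) (hxy : ‖x - y‖ ≤ r)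
    (hγ : IsPathIn X x y γ) : c * ‖x - y‖ ≤ fLength f γ := by
  obtain ⟨hγ0, hγ1, -, hγC⟩ := hγ
  have hint : IntervalIntegrable (fun t => f (γ t) * ‖deriv γ t‖) volume 0 1 :=
    (hγC.intervalIntegrable_deriv zero_le_one).norm.continuousOn_mul
      (by rw [uIcc_of_le zero_le_one]; exact hf.comp_continuousOn hγC.continuousOn)
  obtain ⟨τ, hτ, hin, hexit⟩ := ContinuousOn.exists_first_exit_Icc (φ := fun t => ‖γ t - x‖) zero_le_one
    (hγC.continuousOn.sub continuousOn_const).norm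
    (by simpa [hγ0] using (norm_nonneg _).trans hxy : ‖γ 0 - x‖ ≤ r)
  rw [hγ1, norm_sub_rev, min_eq_left hxy] at hexit
  have hγτ : ContDiffOn ℝ 1 γ (Icc 0 τ) := hγC.mono (Icc_subset_Icc_right hτ.2)
  calc c * ‖x - y‖ ≤ c * ‖γ τ - x‖ := by gcongr
    _ ≤ c * ∫ t in (0:ℝ)..τ, ‖deriv γ t‖ := by
        gcongr
        rw [← hγ0]
        exact norm_sub_le_integral_of_norm_deriv_le_of_le hτ.1 hγτ.continuousOn
          ((hγτ.differentiableOn one_ne_zero).mono Ioo_subset_Icc_self)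
          (ae_of_all _ fun _ _ => le_rfl) (hγτ.intervalIntegrable_deriv hτ.1).norm
    _ = ∫ t in (0:ℝ)..τ, c * ‖deriv γ t‖ := (intervalIntegral.integral_const_mul _ _).symm
    _ ≤ ∫ t in (0:ℝ)..τ, f (γ t) * ‖deriv γ t‖ := by
        refine intervalIntegral.integral_mono_on hτ.1
          ((hγτ.intervalIntegrable_deriv hτ.1).norm.const_mul c)
          (hint.mono_set (by simpa [uIcc_of_le hτ.1] using Icc_subset_Icc_right hτ.2))
          fun t ht => mul_le_mul_of_nonneg_right (hfc _ ?_) (norm_nonneg _)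
        exact mem_closedBall_iff_norm.2 (hin t ht)
    _ ≤ fLength f γ := intervalIntegral.integral_mono_interval le_rfl hτ.1 hτ.2
        (ae_of_all _ fun _ => mul_nonneg (hf0 _) (norm_nonneg _)) hint

end WeightedLength

theorem abs_sub_le_mul_of_norm_sub_le {E : Type*} [SeminormedAddGroup E] {p : E → ℝ}
    {L pmin lam : ℝ} {x z : E} (hL : 0 < L) (hlip : ∀ x y, |p x - p y| ≤ L * ‖x - y‖)
    (hlam0 : 0 ≤ lam) (hpx : pmin ≤ p x) (hz : ‖z - x‖ ≤ pmin * lam / L) :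
    |p z - p x| ≤ lam * p x :=
  calc |p z - p x| ≤ L * ‖z - x‖ := hlip z x
    _ ≤ L * (pmin * lam / L) := by gcongr
    _ = pmin * lam := by field_simp
    _ ≤ lam * p x := by nlinarith

theorem rpow_mem_Icc_of_abs_sub_le_mul {a b lam e : ℝ} (ha : 0 ≤ a) (hlam0 : 0 ≤ lam)
    (hlam1 : lam ≤ 1) (he : 0 ≤ e) (h : |b - a| ≤ lam * a) :
    b ^ e ∈ Icc ((1 - lam) ^ e * a ^ e) ((1 + lam) ^ e * a ^ e) := by
  obtain ⟨hlow, hhigh⟩ := abs_le.1 h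
  rw [← Real.mul_rpow (by linarith) ha, ← Real.mul_rpow (by linarith) ha]
  exact ⟨Real.rpow_le_rpow (by nlinarith) (by linarith) he,
    Real.rpow_le_rpow (by nlinarith) (by linarith) he⟩

theorem fDist_approx_small_ball_general {d : ℕ}
    (X : Set (EuclideanSpace ℝ (Fin d)))
    (p : EuclideanSpace ℝ (Fin d) → ℝ)
    (L pmin : ℝ) (hL : 0 < L) (hpmin : 0 < pmin)
    (hlip : ∀ x y, |p x - p y| ≤ L * ‖x - y‖)
    (hlow : ∀ x, pmin ≤ p x)
    (q : EuclideanSpace ℝ (Fin d) → ℝ)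
    (hq : ∀ x, q x = (p x) ^ ((1:ℝ)/d))
    (lam : ℝ) (hlam0 : 0 ≤ lam) (hlam : lam < 1)
    (x y : EuclideanSpace ℝ (Fin d))
    (hxy : ‖x - y‖ ≤ pmin * lam / L)
    (hseg : segment ℝ x y ⊆ Metric.closedBall x (pmin * lam / L) ∩ X) :
    (1 - lam) ^ ((1:ℝ)/d) * q x * ‖x - y‖ ≤ fDist X q x y ∧
    fDist X q x y ≤ (1 + lam) ^ ((1:ℝ)/d) * q x * ‖x - y‖ := by
  have he : (0:ℝ) ≤ 1 / d := by positivity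
  have hp0 : ∀ z, 0 ≤ p z := fun z => hpmin.le.trans (hlow z)
  have hqc : Continuous q := by
    rw [funext hq]
    exact (LipschitzWith.of_dist_le' (by simpa [Real.dist_eq, dist_eq_norm] using hlip)).continuous
      |>.rpow_const fun _ => Or.inr he
  have hq0 : ∀ z, 0 ≤ q z := fun z => (hq z).symm ▸ Real.rpow_nonneg (hp0 z) _
  have hqball : ∀ z ∈ closedBall x (pmin * lam / L),
      q z ∈ Icc ((1 - lam) ^ ((1:ℝ)/d) * q x) ((1 + lam) ^ ((1:ℝ)/d) * q x) := fun z hz => by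
    rw [hq, hq]
    exact rpow_mem_Icc_of_abs_sub_le_mul (hp0 x) hlam0 hlam.le he
      (abs_sub_le_mul_of_norm_sub_le hL hlip hlam0 (hlow x) (mem_closedBall_iff_norm.1 hz))
  have hline := isPathIn_lineMap (hseg.trans inter_subset_right)
  refine ⟨le_fDist hline fun γ hγ => mul_norm_sub_le_fLength hqc hq0
    (mul_nonneg (Real.rpow_nonneg (by linarith) _) (hq0 x)) (fun z hz => (hqball z hz).1) hxy hγ, ?_⟩
  exact (fDist_le_fLength hq0 hline).trans (fLength_lineMap_le hqc fun z hz => (hqball z (hseg hz).1).2)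

/-- for `q = p^{1/d}` with `p` `L`-Lipschitz and bounded below by
`p_min > 0`, `λ < 1`, and `‖x − y‖ ≤ p_min·λ/L`: the `q`-distance satisfies
`(1 − λ)^{1/d} q(x)‖x − y‖ ≤ D_q(x,y) ≤ (1 + λ)^{1/d} q(x)‖x − y‖`,
provided the ball `{z : ‖z − x‖ ≤ p_min·λ/L}` lies in `X` (so it contains the
straight segment from `x` to `y`) and contains every `q`-geodesic between `x` and `y`. -/
theorem fDist_approx_small_ball {d : ℕ} (hd : 1 ≤ d)
    (X : Set (EuclideanSpace ℝ (Fin d)))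
    (p : EuclideanSpace ℝ (Fin d) → ℝ)
    (L pmin : ℝ) (hL : 0 < L) (hpmin : 0 < pmin)
    (hlip : ∀ x y, |p x - p y| ≤ L * ‖x - y‖)
    (hlow : ∀ x, pmin ≤ p x)
    (q : EuclideanSpace ℝ (Fin d) → ℝ)
    (hq : ∀ x, q x = (p x) ^ ((1:ℝ)/d))
    (lam : ℝ) (hlam0 : 0 ≤ lam) (hlam : lam < 1)
    (x y : EuclideanSpace ℝ (Fin d)) (hx : x ∈ X) (hy : y ∈ X)
    (hxy : ‖x - y‖ ≤ pmin * lam / L)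
    (hseg : segment ℝ x y ⊆ Metric.closedBall x (pmin * lam / L) ∩ X)
    (hgeo : ∀ γ : ℝ → EuclideanSpace ℝ (Fin d), IsPathIn X x y γ →
      fLength q γ = fDist X q x y →
      ∀ t ∈ Set.Icc (0:ℝ) 1, γ t ∈ Metric.closedBall x (pmin * lam / L)) :
    (1 - lam) ^ ((1:ℝ)/d) * q x * ‖x - y‖ ≤ fDist X q x y ∧
    fDist X q x y ≤ (1 + lam) ^ ((1:ℝ)/d) * q x * ‖x - y‖ :=
  fDist_approx_small_ball_general X p L pmin hL hpmin hlip hlow q hq lam hlam0 hlam x y hxy hseg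
end

section
/- Upper bound of Proposition 3 (deterministic): In an unweighted geometric graph with connectivity parameters r_low, r_up satisfying the dense sampling assumption with parameter ς < r_low/4, for any two vertices x, y: (r_low − 2ς)·(D_sp(x,y) − 1) ≤ D_f(x,y), where D_sp is the unweighted shortest path distance in the graph. -/
/-- upper bound of Proposition 3, deterministic: in an unweighted
geometric graph with connectivity parameter `r_low` satisfying the dense sampling
assumption with parameter `ς < r_low/4`, for any two vertices `x = ι i`, `y = ι j`:
`(r_low − 2ς)·(D_sp(x,y) − 1) ≤ D_f(x,y)`. -/
theorem sp_upper_bound {d n : ℕ} (X : Set (EuclideanSpace ℝ (Fin d)))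
    (D : EuclideanSpace ℝ (Fin d) → EuclideanSpace ℝ (Fin d) → ℝ)
    -- `D` is a metric on `X`:
    (hDnonneg : ∀ x ∈ X, ∀ y ∈ X, 0 ≤ D x y)
    (hDself : ∀ x ∈ X, D x x = 0)
    (hDsymm : ∀ x ∈ X, ∀ y ∈ X, D x y = D y x)
    (hDtri : ∀ x ∈ X, ∀ y ∈ X, ∀ z ∈ X, D x z ≤ D x y + D y z)
    -- `D` is a geodesic distance: it is realized by paths along which it is additive
    (hgeo : ∀ x ∈ X, ∀ y ∈ X, ∀ s : ℝ, 0 ≤ s → s ≤ D x y →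
      ∃ u ∈ X, D x u = s ∧ D x u + D u y = D x y)
    (G : SimpleGraph (Fin n)) (ι : Fin n → EuclideanSpace ℝ (Fin d))
    (hι : ∀ i, ι i ∈ X)
    (r_low ς : ℝ) (hς0 : 0 ≤ ς) (hς : ς < r_low / 4)
    -- connectivity parameter: `D ≤ r_low` implies an edge
    (hlow : ∀ i j : Fin n, i ≠ j → D (ι i) (ι j) ≤ r_low → G.Adj i j)
    -- dense sampling assumption
    (hdense : ∀ x ∈ X, ∃ i : Fin n, D x (ι i) ≤ ς)
    (i j : Fin n) :
    (r_low - 2 * ς) * ((G.dist i j : ℝ) - 1) ≤ D (ι i) (ι j) := by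
  set c := r_low - 2 * ς with hc
  have hcpos : 0 < c := by simp only [hc]; linarith
  have key : ∀ m : ℕ, ∀ a b : Fin n, D (ι a) (ι b) ≤ r_low + c * m →
      ∃ p : G.Walk a b, p.length ≤ m + 1 := by
    intro m
    induction m with
    | zero =>
      intro a b h
      by_cases hab : a = b
      · subst hab; exact ⟨.nil, by simp⟩
      · exact ⟨.cons (hlow a b hab (by simpa using h)) .nil, by simp⟩
    | succ m ih =>
      intro a b h
      by_cases h0 : D (ι a) (ι b) ≤ r_low
      · by_cases hab : a = b
        · subst hab; exact ⟨.nil, by simp⟩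
        · exact ⟨.cons (hlow a b hab h0) .nil, by simp only [SimpleGraph.Walk.length_cons, SimpleGraph.Walk.length_nil]; omega⟩
      · push_neg at h0
        obtain ⟨u, hu, hs, hadd⟩ := hgeo (ι a) (hι a) (ι b) (hι b) (c + ς)
          (by linarith) (by simp only [hc]; linarith)
        obtain ⟨k, hk⟩ := hdense u hu
        have hak : D (ι a) (ι k) ≤ r_low := by
          have := hDtri (ι a) (hι a) u hu (ι k) (hι k)
          simp only [hc] at hs ⊢; linarith
        have hub : D u (ι b) = D (ι a) (ι b) - (c + ς) := by linarith
        have hkb : D (ι k) (ι b) ≤ r_low + c * m := by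
          have h1 := hDtri (ι k) (hι k) u hu (ι b) (hι b)
          have h2 : D (ι k) u = D u (ι k) := (hDsymm u hu (ι k) (hι k)).symm
          push_cast at h
          linarith
        obtain ⟨p, hp⟩ := ih k b hkb
        by_cases hak' : a = k
        · subst hak'; exact ⟨p, by omega⟩
        · exact ⟨.cons (hlow a k hak' hak) p, by simpa using Nat.succ_le_succ hp⟩
  have hD0 : 0 ≤ D (ι i) (ι j) := hDnonneg (ι i) (hι i) (ι j) (hι j)
  set m : ℕ := ⌊D (ι i) (ι j) / c⌋₊ with hm
  have hm1 : c * m ≤ D (ι i) (ι j) := by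
    have h1 : (m : ℝ) ≤ D (ι i) (ι j) / c := Nat.floor_le (div_nonneg hD0 hcpos.le)
    rw [le_div_iff₀ hcpos] at h1
    linarith
  have hm2 : D (ι i) (ι j) ≤ r_low + c * m := by
    have h1 : D (ι i) (ι j) / c < (m : ℝ) + 1 := Nat.lt_floor_add_one _
    rw [div_lt_iff₀ hcpos] at h1
    have h2 : D (ι i) (ι j) < c * m + c := by nlinarith
    simp only [hc] at h2 ⊢; linarith
  obtain ⟨p, hp⟩ := key m i j hm2
  have hdist : G.dist i j ≤ m + 1 := le_trans (SimpleGraph.dist_le p) hp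
  have hdist' : (G.dist i j : ℝ) - 1 ≤ (m : ℝ) := by
    have : (G.dist i j : ℝ) ≤ (m : ℝ) + 1 := by exact_mod_cast hdist
    linarith
  calc c * ((G.dist i j : ℝ) - 1) ≤ c * m := by
        exact mul_le_mul_of_nonneg_left hdist' hcpos.le
    _ ≤ D (ι i) (ι j) := hm1
end

section
/- Combining both bounds: under the connectivity parameters and dense sampling assumption with ς < r_low/4, setting e₁ = (r_low − 2ς)/r_up and e₂ = r_low − 2ς, one has e₁·D_f(x,y) ≤ e₂·D_sp(x,y) ≤ D_f(x,y) + e₂ (equivalently e₂(D_sp(x,y) − 1) ≤ D_f(x,y)). -/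
/-- Proposition 3, both bounds combined: under the connectivity
parameters `r_low ≤ r_up` and the dense sampling assumption with `ς < r_low/4`,
setting `e₁ = (r_low − 2ς)/r_up` and `e₂ = r_low − 2ς`, one has
`e₁·D_f(x,y) ≤ e₂·D_sp(x,y)` and `e₂·D_sp(x,y) ≤ D_f(x,y) + e₂`. -/
theorem sp_sandwich {d n : ℕ} (X : Set (EuclideanSpace ℝ (Fin d)))
    (D : EuclideanSpace ℝ (Fin d) → EuclideanSpace ℝ (Fin d) → ℝ)
    -- `D` is a metric on `X`:
    (hDnonneg : ∀ x ∈ X, ∀ y ∈ X, 0 ≤ D x y)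
    (hDself : ∀ x ∈ X, D x x = 0)
    (hDsymm : ∀ x ∈ X, ∀ y ∈ X, D x y = D y x)
    (hDtri : ∀ x ∈ X, ∀ y ∈ X, ∀ z ∈ X, D x z ≤ D x y + D y z)
    -- `D` is a geodesic distance: realized by paths along which it is additive
    (hgeo : ∀ x ∈ X, ∀ y ∈ X, ∀ s : ℝ, 0 ≤ s → s ≤ D x y →
      ∃ u ∈ X, D x u = s ∧ D x u + D u y = D x y)
    (G : SimpleGraph (Fin n)) (ι : Fin n → EuclideanSpace ℝ (Fin d))
    (hι : ∀ i, ι i ∈ X)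
    (r_low r_up ς : ℝ) (hr : r_low ≤ r_up) (hς0 : 0 ≤ ς) (hς : ς < r_low / 4)
    -- connectivity parameters: edges exist whenever `D ≤ r_low`, never when `D ≥ r_up`
    (hlow : ∀ i j : Fin n, i ≠ j → D (ι i) (ι j) ≤ r_low → G.Adj i j)
    (hup : ∀ i j : Fin n, r_up ≤ D (ι i) (ι j) → ¬ G.Adj i j)
    -- dense sampling assumption
    (hdense : ∀ x ∈ X, ∃ i : Fin n, D x (ι i) ≤ ς)
    (i j : Fin n) :
    (r_low - 2 * ς) / r_up * D (ι i) (ι j) ≤ (r_low - 2 * ς) * (G.dist i j : ℝ) ∧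
    (r_low - 2 * ς) * (G.dist i j : ℝ) ≤ D (ι i) (ι j) + (r_low - 2 * ς) := by
  have hrlow : 0 < r_low := by linarith
  have he₂pos : 0 < r_low - 2 * ς := by linarith
  have hrup : 0 < r_up := lt_of_lt_of_le hrlow hr
  -- each edge has D < r_up, so any walk bounds D by r_up * length
  have lemA : ∀ {a c : Fin n} (w : G.Walk a c),
      D (ι a) (ι c) ≤ r_up * w.length := by
    intro a c w
    induction w with
    | nil => simp [hDself _ (hι _)]
    | @cons a x c h p ih =>
      have hedge : D (ι a) (ι x) < r_up := by
        by_contra hc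
        exact hup a x (le_of_not_gt hc) h
      have htri := hDtri (ι a) (hι a) (ι x) (hι x) (ι c) (hι c)
      have : (p.cons h).length = p.length + 1 := rfl
      rw [this]
      push_cast
      linarith
  -- construction of a short walk
  have lemB : ∀ m : ℕ, ∀ a b : Fin n, D (ι a) (ι b) ≤ ((m : ℝ) + 1) * (r_low - 2 * ς) →
      ∃ w : G.Walk a b, w.length ≤ m + 1 := by
    intro m
    induction m with
    | zero =>
      intro a b hD
      by_cases hab : a = b
      · subst hab; exact ⟨.nil, by simp⟩
      · refine ⟨.cons (hlow a b hab ?_) .nil, by simp⟩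
        have : ((0 : ℝ) + 1) * (r_low - 2 * ς) = r_low - 2 * ς := by ring
        simp only [Nat.cast_zero] at hD
        linarith
    | succ m ih =>
      intro a b hD
      by_cases hab : a = b
      · subst hab; exact ⟨.nil, by simp⟩
      by_cases hsm : D (ι a) (ι b) ≤ r_low
      · exact ⟨.cons (hlow a b hab hsm) .nil, by simp⟩
      push_neg at hsm
      obtain ⟨u, huX, hu1, hu2⟩ := hgeo (ι a) (hι a) (ι b) (hι b) ((r_low - 2 * ς) + ς)
        (by linarith) (by linarith)
      obtain ⟨v, hv⟩ := hdense u huX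
      have hsymuv : D (ι v) u = D u (ι v) := (hDsymm u huX (ι v) (hι v)).symm
      have hav : D (ι a) (ι v) ≤ r_low := by
        have := hDtri (ι a) (hι a) u huX (ι v) (hι v)
        linarith
      have hvb : D (ι v) (ι b) ≤ ((m : ℝ) + 1) * (r_low - 2 * ς) := by
        have htri := hDtri (ι v) (hι v) u huX (ι b) (hι b)
        have hcast : ((m : ℝ) + 1 + 1) * (r_low - 2 * ς)
            = ((m : ℝ) + 1) * (r_low - 2 * ς) + (r_low - 2 * ς) := by ring
        push_cast at hD
        linarith
      have hanev : a ≠ v := by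
        intro h
        rw [← h] at hv
        have : D (ι a) u ≤ ς := by
          have := hDsymm u huX (ι a) (hι a)
          linarith
        linarith
      obtain ⟨w, hw⟩ := ih v b hvb
      exact ⟨.cons (hlow a v hanev hav) w, by simp [SimpleGraph.Walk.length_cons]; omega⟩
  have hDf0 : 0 ≤ D (ι i) (ι j) := hDnonneg _ (hι i) _ (hι j)
  set m := Nat.floor (D (ι i) (ι j) / (r_low - 2 * ς)) with hm
  have hDle : D (ι i) (ι j) ≤ ((m : ℝ) + 1) * (r_low - 2 * ς) := by
    have h1 : D (ι i) (ι j) / (r_low - 2 * ς) < (m : ℝ) + 1 := Nat.lt_floor_add_one _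
    have := (div_lt_iff₀ he₂pos).mp h1
    linarith
  obtain ⟨w, hw⟩ := lemB m i j hDle
  have hreach : G.Reachable i j := ⟨w⟩
  have hdist1 : G.dist i j ≤ m + 1 := le_trans (SimpleGraph.dist_le w) hw
  have hmle : (m : ℝ) * (r_low - 2 * ς) ≤ D (ι i) (ι j) := by
    have h1 : (m : ℝ) ≤ D (ι i) (ι j) / (r_low - 2 * ς) := Nat.floor_le (by positivity)
    exact (le_div_iff₀ he₂pos).mp h1
  constructor
  · obtain ⟨p, hp⟩ := hreach.exists_walk_length_eq_dist
    have hA := lemA p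
    rw [hp] at hA
    rw [div_mul_eq_mul_div, div_le_iff₀ hrup]
    nlinarith
  · have hc : (G.dist i j : ℝ) ≤ (m : ℝ) + 1 := by exact_mod_cast hdist1
    nlinarith
end
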